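/- Let χ : ℝ² → ℝ be a kernel (satisfying (χ1), (χ2), (χ3) and m_0(χ) < ∞), and let I(x, y) := ∑_{i=1}^{n} ∑_{j=1}^{m} a_{ij} · 1_{(i−1, i] × (j−1, j]}(x, y) be the step function associated with an n × m real matrix (a_{ij}). Then I ∈ L^p(ℝ²) for every 1 ≤ p < ∞, and for every point (x, y) lying in the interior (i−1, i) × (j−1, j) of some pixel square, lim_{w → ∞} (S_w I)(x, y) = I(x, y) = a_{ij}. -/

import Mathlib

open MeasureTheory Filter

noncomputable def latticePt (n : ℕ) (k : Fin n → ℤ) : EuclideanSpace ℝ (Fin n) :=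
  WithLp.toLp 2 (fun i => (k i : ℝ))

/-- Discrete absolute moment of order `β`. -/
noncomputable def mom (n : ℕ) (χ : EuclideanSpace ℝ (Fin n) → ℝ) (β : ℝ) : ENNReal :=
  ⨆ u : EuclideanSpace ℝ (Fin n), ∑' k : Fin n → ℤ,
    ENNReal.ofReal (|χ (u - latticePt n k)| * ‖u - latticePt n k‖ ^ β)

/-- The cell `R_k^w`. -/
def cell (n : ℕ) (w : ℝ) (k : Fin n → ℤ) : Set (EuclideanSpace ℝ (Fin n)) :=
  {u | ∀ i, u i ∈ Set.Icc ((k i : ℝ) / w) (((k i : ℝ) + 1) / w)}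

/-- Sampling Kantorovich operator. -/
noncomputable def SK (n : ℕ) (χ f : EuclideanSpace ℝ (Fin n) → ℝ) (w : ℝ)
    (x : EuclideanSpace ℝ (Fin n)) : ℝ :=
  ∑' k : Fin n → ℤ, χ (w • x - latticePt n k) * (w ^ n * ∫ u in cell n w k, f u)

/-! A function `f` bounded by `B` and equal to `c` on a ball `B(x, δ)` satisfies, by the partition
of unity `(χ2)`, `S_w f(x) - c = ∑ₖ χ(wx - k) (w² ∫_{R_k^w} f - c)`. For large `w` every cell with
`‖wx - k‖ < wδ/2` lies inside the ball, so its term vanishes; each remaining term is at most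
`2B (wδ/2)^{-β} |χ(wx - k)| ‖wx - k‖^β`, and these sum to at most `2B m_β(χ) (wδ/2)^{-β} → 0`.
The step function is constant near every interior point of a pixel, and it is in every `L^p`
as a finite sum of indicators of boxes of finite measure. -/

section Moment

variable {n : ℕ} {χ : EuclideanSpace ℝ (Fin n) → ℝ} {β : ℝ}

lemma summable_of_mom_lt_top (h : mom n χ β < ⊤) (u : EuclideanSpace ℝ (Fin n)) :
    Summable fun k => |χ (u - latticePt n k)| * ‖u - latticePt n k‖ ^ β := by
  have hle : ∑' k, ENNReal.ofReal (|χ (u - latticePt n k)| * ‖u - latticePt n k‖ ^ β) ≤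
      mom n χ β :=
    le_iSup (fun u => ∑' k, ENNReal.ofReal (|χ (u - latticePt n k)| * ‖u - latticePt n k‖ ^ β)) u
  refine (ENNReal.summable_toReal (hle.trans_lt h).ne).congr fun k => ?_
  exact ENNReal.toReal_ofReal (by positivity)

lemma tsum_le_mom_toReal (h : mom n χ β < ⊤) (u : EuclideanSpace ℝ (Fin n)) :
    ∑' k, |χ (u - latticePt n k)| * ‖u - latticePt n k‖ ^ β ≤ (mom n χ β).toReal := by
  rw [← ENNReal.ofReal_le_iff_le_toReal h.ne,
    ENNReal.ofReal_tsum_of_nonneg (fun _ => by positivity) (summable_of_mom_lt_top h u)]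
  exact le_iSup (fun u => ∑' k, ENNReal.ofReal (|χ (u - latticePt n k)| * ‖u - latticePt n k‖ ^ β)) u

lemma summable_abs_of_mom_zero_lt_top (h : mom n χ 0 < ⊤) (u : EuclideanSpace ℝ (Fin n)) :
    Summable fun k => |χ (u - latticePt n k)| := by
  simpa only [Real.rpow_zero, mul_one] using summable_of_mom_lt_top h u

end Moment

section Cell

variable {n : ℕ} {w : ℝ}

lemma cell_eq_preimage_pi (n : ℕ) (w : ℝ) (k : Fin n → ℤ) :
    cell n w k = WithLp.ofLp ⁻¹' Set.univ.pi fun i => Set.Icc ((k i : ℝ) / w) ((k i + 1) / w) := by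
  ext u; simp only [cell, Set.mem_ofPred_eq, Set.mem_preimage, Set.mem_univ_pi]

lemma measurableSet_cell (n : ℕ) (w : ℝ) (k : Fin n → ℤ) : MeasurableSet (cell n w k) := by
  rw [cell_eq_preimage_pi]
  exact (MeasurableSet.univ_pi fun _ => measurableSet_Icc).preimage (WithLp.measurable_ofLp 2 _)

lemma volume_cell (hw : 0 < w) (k : Fin n → ℤ) : volume (cell n w k) = ENNReal.ofReal w⁻¹ ^ n := by
  rw [cell_eq_preimage_pi, (PiLp.volume_preserving_ofLp (Fin n)).measure_preimage
    (MeasurableSet.univ_pi fun _ => measurableSet_Icc).nullMeasurableSet, volume_pi_pi]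
  have hside : ∀ i, volume (Set.Icc ((k i : ℝ) / w) ((k i + 1) / w)) = ENNReal.ofReal w⁻¹ := by
    intro i; rw [Real.volume_Icc]; congr 1; field_simp; ring
  simp [hside]

lemma measureReal_cell (hw : 0 < w) (k : Fin n → ℤ) : volume.real (cell n w k) = (w ^ n)⁻¹ := by
  simp [measureReal_def, volume_cell hw, ENNReal.toReal_ofReal, hw.le]

lemma abs_mul_setIntegral_cell_le {f : EuclideanSpace ℝ (Fin n) → ℝ} {B : ℝ} (hw : 0 < w)
    (hf : ∀ u, |f u| ≤ B) (k : Fin n → ℤ) : |w ^ n * ∫ u in cell n w k, f u| ≤ B := by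
  have hint := norm_setIntegral_le_of_norm_le_const (μ := volume) (s := cell n w k)
    (by simp [volume_cell hw]) fun u _ => (Real.norm_eq_abs _).trans_le (hf u)
  rw [measureReal_cell hw, Real.norm_eq_abs] at hint
  rw [abs_mul, abs_of_pos (by positivity)]
  calc w ^ n * |∫ u in cell n w k, f u| ≤ w ^ n * (B * (w ^ n)⁻¹) := by gcongr
    _ = B := by field_simp

lemma mul_setIntegral_cell_of_eqOn {f : EuclideanSpace ℝ (Fin n) → ℝ} {c : ℝ} (hw : 0 < w)
    {k : Fin n → ℤ} (hf : ∀ u ∈ cell n w k, f u = c) : w ^ n * ∫ u in cell n w k, f u = c := by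
  rw [setIntegral_congr_fun (measurableSet_cell n w k) hf, setIntegral_const, smul_eq_mul,
    measureReal_cell hw]
  field_simp

lemma dist_le_of_mem_cell (hw : 0 < w) {k : Fin n → ℤ} {u : EuclideanSpace ℝ (Fin n)}
    (hu : u ∈ cell n w k) : dist u (w⁻¹ • latticePt n k) ≤ √n / w := by
  have hcoord : ∀ i, dist (u i) ((w⁻¹ • latticePt n k) i) ^ 2 ≤ (w⁻¹) ^ 2 := by
    intro i
    obtain ⟨h₁, h₂⟩ := hu i
    rw [div_eq_inv_mul] at h₁
    rw [div_eq_inv_mul, mul_add, mul_one] at h₂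
    simp only [latticePt, PiLp.smul_apply, smul_eq_mul, Real.dist_eq, sq_abs]
    exact pow_le_pow_left₀ (by linarith) (by linarith) 2
  calc dist u (w⁻¹ • latticePt n k) ≤ √(∑ _ : Fin n, (w⁻¹) ^ 2) := by
        rw [EuclideanSpace.dist_eq]; exact Real.sqrt_le_sqrt (Finset.sum_le_sum fun i _ => hcoord i)
    _ = √n / w := by simp [hw.le, div_eq_mul_inv]

end Cell

section Localization

variable {n : ℕ} {χ f : EuclideanSpace ℝ (Fin n) → ℝ} {w δ β B c : ℝ} {x : EuclideanSpace ℝ (Fin n)}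

lemma cell_subset_ball (hw : 0 < w) (hδw : √n / w ≤ δ / 2) {k : Fin n → ℤ}
    (hk : ‖w • x - latticePt n k‖ < w * δ / 2) : cell n w k ⊆ Metric.ball x δ := by
  intro u hu
  have hcenter : dist (w⁻¹ • latticePt n k) x < δ / 2 := by
    rw [dist_eq_norm, ← inv_smul_smul₀ hw.ne' x, ← smul_sub, norm_smul, norm_inv,
      Real.norm_of_nonneg hw.le, norm_sub_rev, inv_mul_lt_iff₀ hw]
    linarith
  rw [Metric.mem_ball]
  linarith [dist_triangle u (w⁻¹ • latticePt n k) x, dist_le_of_mem_cell hw hu]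

lemma SK_sub_const_eq_tsum (hχ2 : ∀ y, ∑' k, χ (y - latticePt n k) = 1) (hχ0 : mom n χ 0 < ⊤)
    (hf : ∀ u, |f u| ≤ B) (hw : 0 < w) (x : EuclideanSpace ℝ (Fin n)) (c : ℝ) :
    SK n χ f w x - c =
      ∑' k, χ (w • x - latticePt n k) * ((w ^ n * ∫ u in cell n w k, f u) - c) := by
  have hχsum := summable_abs_of_mom_zero_lt_top hχ0 (w • x)
  have hmean : Summable fun k => χ (w • x - latticePt n k) * (w ^ n * ∫ u in cell n w k, f u) :=
    Summable.of_norm_bounded (hχsum.mul_right B) fun k => by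
      rw [Real.norm_eq_abs, abs_mul]
      exact mul_le_mul_of_nonneg_left (abs_mul_setIntegral_cell_le hw hf k) (abs_nonneg _)
  have hconst : ∑' k, χ (w • x - latticePt n k) * c = c := by
    rw [tsum_mul_right, hχ2, one_mul]
  simp_rw [mul_sub]
  rw [hmean.tsum_sub (hχsum.of_abs.mul_right c), hconst]
  rfl

lemma abs_SK_sub_le (hχ2 : ∀ y, ∑' k, χ (y - latticePt n k) = 1) (hχ0 : mom n χ 0 < ⊤)
    (hβ : 0 < β) (hχβ : mom n χ β < ⊤) (hf : ∀ u, |f u| ≤ B) (hc : |c| ≤ B)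
    (hfc : ∀ u ∈ Metric.ball x δ, f u = c) (hw : 0 < w) (hδ : 0 < δ) (hδw : √n / w ≤ δ / 2) :
    |SK n χ f w x - c| ≤ 2 * B / (w * δ / 2) ^ β * (mom n χ β).toReal := by
  set ρ := w * δ / 2
  have hρ : 0 < ρ := by positivity
  have hB : 0 ≤ B := (abs_nonneg c).trans hc
  have hterm : ∀ k, ‖χ (w • x - latticePt n k) * ((w ^ n * ∫ u in cell n w k, f u) - c)‖ ≤
      2 * B / ρ ^ β * (|χ (w • x - latticePt n k)| * ‖w • x - latticePt n k‖ ^ β) := by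
    intro k
    rw [Real.norm_eq_abs]
    rcases lt_or_ge ‖w • x - latticePt n k‖ ρ with hnear | hfar
    · rw [mul_setIntegral_cell_of_eqOn hw fun u hu => hfc u (cell_subset_ball hw hδw hnear hu),
        sub_self, mul_zero, abs_zero]
      positivity
    · have hmean : |(w ^ n * ∫ u in cell n w k, f u) - c| ≤ 2 * B := by
        linarith [abs_sub (w ^ n * ∫ u in cell n w k, f u) c, abs_mul_setIntegral_cell_le hw hf k]
      have hratio : 1 ≤ ‖w • x - latticePt n k‖ ^ β / ρ ^ β :=
        (one_le_div (by positivity)).mpr (Real.rpow_le_rpow hρ.le hfar hβ.le)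
      calc _ = |χ (w • x - latticePt n k)| * |(w ^ n * ∫ u in cell n w k, f u) - c| := abs_mul _ _
        _ ≤ |χ (w • x - latticePt n k)| * (2 * B) := by gcongr
        _ ≤ |χ (w • x - latticePt n k)| * (2 * B) * (‖w • x - latticePt n k‖ ^ β / ρ ^ β) :=
          le_mul_of_one_le_right (by positivity) hratio
        _ = _ := by ring
  have hmajorant := (summable_of_mom_lt_top hχβ (w • x)).mul_left (2 * B / ρ ^ β)
  have hsum := hmajorant.of_nonneg_of_le (fun _ => norm_nonneg _) hterm
  rw [← Real.norm_eq_abs, SK_sub_const_eq_tsum hχ2 hχ0 hf hw x c]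
  calc _ ≤ ∑' k, ‖χ (w • x - latticePt n k) * ((w ^ n * ∫ u in cell n w k, f u) - c)‖ :=
        norm_tsum_le_tsum_norm hsum
    _ ≤ ∑' k, 2 * B / ρ ^ β * (|χ (w • x - latticePt n k)| * ‖w • x - latticePt n k‖ ^ β) :=
        hsum.tsum_le_tsum hterm hmajorant
    _ ≤ 2 * B / ρ ^ β * (mom n χ β).toReal := by
        rw [tsum_mul_left]
        gcongr
        exact tsum_le_mom_toReal hχβ (w • x)

theorem tendsto_SK_of_eventuallyEq (hχ2 : ∀ y, ∑' k, χ (y - latticePt n k) = 1)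
    (hχ0 : mom n χ 0 < ⊤) (hβ : 0 < β) (hχβ : mom n χ β < ⊤) (hf : ∀ u, |f u| ≤ B)
    (hfx : ∀ᶠ u in nhds x, f u = c) : Tendsto (fun w => SK n χ f w x) atTop (nhds c) := by
  obtain ⟨δ, hδ, hfc⟩ := Metric.eventually_nhds_iff_ball.mp hfx
  have hc : |c| ≤ B := hfc x (Metric.mem_ball_self hδ) ▸ hf x
  have hbound : Tendsto (fun w => 2 * B / (w * δ / 2) ^ β * (mom n χ β).toReal) atTop (nhds 0) := by
    have hρ : Tendsto (fun w : ℝ => w * δ / 2) atTop atTop :=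
      (tendsto_id.atTop_mul_const hδ).atTop_div_const two_pos
    simpa using ((tendsto_rpow_atTop hβ).comp hρ).const_div_atTop (2 * B) |>.mul_const _
  have hsmall : ∀ᶠ w in atTop, 0 < w ∧ √n / w ≤ δ / 2 :=
    (eventually_gt_atTop 0).and <|
      (tendsto_const_nhds.div_atTop tendsto_id).eventually (ge_mem_nhds (half_pos hδ))
  rw [tendsto_iff_norm_sub_tendsto_zero]
  refine squeeze_zero' (Eventually.of_forall fun w => norm_nonneg _) ?_ hbound
  filter_upwards [hsmall] with w ⟨hw, hδw⟩
  exact abs_SK_sub_le hχ2 hχ0 hβ hχβ hf hc hfc hw hδ hδw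

end Localization

section StepFunction

noncomputable def stepFun {N M : ℕ} (a : Fin N → Fin M → ℝ) (x : EuclideanSpace ℝ (Fin 2)) : ℝ :=
  ∑ i : Fin N, ∑ j : Fin M,
    if x 0 ∈ Set.Ioc ((i : ℕ) : ℝ) ((i : ℕ) + 1) ∧
       x 1 ∈ Set.Ioc ((j : ℕ) : ℝ) ((j : ℕ) + 1) then a i j else 0

lemma Nat.eq_of_mem_Ioc_of_mem_Ioc {p q : ℕ} {t : ℝ} (hp : t ∈ Set.Ioc (p : ℝ) (p + 1))
    (hq : t ∈ Set.Ioc (q : ℝ) (q + 1)) : p = q := by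
  have h₁ : (p : ℝ) < q + 1 := hp.1.trans_le hq.2
  have h₂ : (q : ℝ) < p + 1 := hq.1.trans_le hp.2
  norm_cast at h₁ h₂
  omega

variable {N M : ℕ} (a : Fin N → Fin M → ℝ)

lemma stepFun_eq_of_mem {i : Fin N} {j : Fin M} {x : EuclideanSpace ℝ (Fin 2)}
    (hx0 : x 0 ∈ Set.Ioc ((i : ℕ) : ℝ) ((i : ℕ) + 1))
    (hx1 : x 1 ∈ Set.Ioc ((j : ℕ) : ℝ) ((j : ℕ) + 1)) : stepFun a x = a i j := by
  rw [stepFun, Fintype.sum_eq_single i, Fintype.sum_eq_single j, if_pos ⟨hx0, hx1⟩]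
  · exact fun j' hj' => if_neg fun h => hj' (Fin.ext (Nat.eq_of_mem_Ioc_of_mem_Ioc h.2 hx1))
  · refine fun i' hi' => Finset.sum_eq_zero fun j' _ => if_neg fun h => hi' (Fin.ext ?_)
    exact Nat.eq_of_mem_Ioc_of_mem_Ioc h.1 hx0

lemma abs_stepFun_le (x : EuclideanSpace ℝ (Fin 2)) :
    |stepFun a x| ≤ ∑ i : Fin N, ∑ j : Fin M, |a i j| := by
  refine (Finset.abs_sum_le_sum_abs _ _).trans (Finset.sum_le_sum fun i _ => ?_)
  refine (Finset.abs_sum_le_sum_abs _ _).trans (Finset.sum_le_sum fun j _ => ?_)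
  split_ifs <;> simp

lemma volume_setOf_apply_zero_mem_and_apply_one_mem {s t : Set ℝ} (hs : MeasurableSet s)
    (ht : MeasurableSet t) :
    volume {x : EuclideanSpace ℝ (Fin 2) | x 0 ∈ s ∧ x 1 ∈ t} = volume s * volume t := by
  have hmp := (measurePreserving_finTwoArrow (volume : Measure ℝ)).comp
    (PiLp.volume_preserving_ofLp (Fin 2))
  rw [← Measure.volume_eq_prod] at hmp
  rw [← Measure.prod_prod, ← Measure.volume_eq_prod]
  exact hmp.measure_preimage (hs.prod ht).nullMeasurableSet

lemma memLp_stepFun (p : ENNReal) : MemLp (stepFun a) p := by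
  have hind : stepFun a = fun x => ∑ i : Fin N, ∑ j : Fin M,
      {u : EuclideanSpace ℝ (Fin 2) | u 0 ∈ Set.Ioc ((i : ℕ) : ℝ) ((i : ℕ) + 1) ∧
        u 1 ∈ Set.Ioc ((j : ℕ) : ℝ) ((j : ℕ) + 1)}.indicator (fun _ => a i j) x := by
    funext x
    simp only [stepFun, Set.indicator_apply, Set.mem_ofPred_eq]
  rw [hind]
  refine memLp_finsetSum _ fun i _ => memLp_finsetSum _ fun j _ => memLp_indicator_const p ?_ _ ?_
  · exact (measurableSet_Ioc.preimage (by fun_prop)).inter (measurableSet_Ioc.preimage (by fun_prop))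
  · right
    rw [volume_setOf_apply_zero_mem_and_apply_one_mem measurableSet_Ioc measurableSet_Ioc]
    simp [Real.volume_Ioc]

lemma eventually_stepFun_eq {i : Fin N} {j : Fin M} {x : EuclideanSpace ℝ (Fin 2)}
    (hx0 : x 0 ∈ Set.Ioo ((i : ℕ) : ℝ) ((i : ℕ) + 1))
    (hx1 : x 1 ∈ Set.Ioo ((j : ℕ) : ℝ) ((j : ℕ) + 1)) : ∀ᶠ u in nhds x, stepFun a u = a i j := by
  have hopen : IsOpen {u : EuclideanSpace ℝ (Fin 2) |
      u 0 ∈ Set.Ioo ((i : ℕ) : ℝ) ((i : ℕ) + 1) ∧ u 1 ∈ Set.Ioo ((j : ℕ) : ℝ) ((j : ℕ) + 1)} :=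
    (isOpen_Ioo.preimage (by fun_prop)).inter (isOpen_Ioo.preimage (by fun_prop))
  filter_upwards [hopen.mem_nhds ⟨hx0, hx1⟩] with u hu
  exact stepFun_eq_of_mem a (Set.Ioo_subset_Ioc_self hu.1) (Set.Ioo_subset_Ioc_self hu.2)

end StepFunction

theorem stmt17_general (χ : EuclideanSpace ℝ (Fin 2) → ℝ)
    (hχ2 : ∀ y : EuclideanSpace ℝ (Fin 2), ∑' k : Fin 2 → ℤ, χ (y - latticePt 2 k) = 1)
    (hχ3 : ∃ β > (0:ℝ), mom 2 χ β < ⊤)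
    (hχ0 : mom 2 χ 0 < ⊤)
    (N M : ℕ) (a : Fin N → Fin M → ℝ)
    (I : EuclideanSpace ℝ (Fin 2) → ℝ)
    (hI : ∀ x : EuclideanSpace ℝ (Fin 2),
      I x = ∑ i : Fin N, ∑ j : Fin M,
        if x 0 ∈ Set.Ioc ((i : ℕ) : ℝ) ((i : ℕ) + 1) ∧
           x 1 ∈ Set.Ioc ((j : ℕ) : ℝ) ((j : ℕ) + 1) then a i j else 0) :
    (∀ p : ℝ, 1 ≤ p → MemLp I (ENNReal.ofReal p)) ∧
    ∀ (i : Fin N) (j : Fin M) (x : EuclideanSpace ℝ (Fin 2)),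
      x 0 ∈ Set.Ioo ((i : ℕ) : ℝ) ((i : ℕ) + 1) →
      x 1 ∈ Set.Ioo ((j : ℕ) : ℝ) ((j : ℕ) + 1) →
      I x = a i j ∧
      Tendsto (fun w : ℝ => SK 2 χ I w x) atTop (nhds (I x)) := by
  obtain rfl : I = stepFun a := funext hI
  refine ⟨fun p _ => memLp_stepFun a _, fun i j x hx0 hx1 => ?_⟩
  have hx : stepFun a x = a i j :=
    stepFun_eq_of_mem a (Set.Ioo_subset_Ioc_self hx0) (Set.Ioo_subset_Ioc_self hx1)
  obtain ⟨β, hβ, hχβ⟩ := hχ3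
  refine ⟨hx, hx ▸ tendsto_SK_of_eventuallyEq hχ2 hχ0 hβ hχβ (abs_stepFun_le a) ?_⟩
  exact eventually_stepFun_eq a hx0 hx1

theorem stmt17 (χ : EuclideanSpace ℝ (Fin 2) → ℝ)
    (hχmeas : Measurable χ)
    (hχ1 : Integrable χ)
    (hχbd : ∃ δ > (0:ℝ), ∃ M : ℝ, ∀ x : EuclideanSpace ℝ (Fin 2), ‖x‖ ≤ δ → |χ x| ≤ M)
    (hχ2 : ∀ y : EuclideanSpace ℝ (Fin 2), ∑' k : Fin 2 → ℤ, χ (y - latticePt 2 k) = 1)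
    (hχ3 : ∃ β > (0:ℝ), mom 2 χ β < ⊤)
    (hχ0 : mom 2 χ 0 < ⊤)
    (N M : ℕ) (a : Fin N → Fin M → ℝ)
    (I : EuclideanSpace ℝ (Fin 2) → ℝ)
    (hI : ∀ x : EuclideanSpace ℝ (Fin 2),
      I x = ∑ i : Fin N, ∑ j : Fin M,
        if x 0 ∈ Set.Ioc ((i : ℕ) : ℝ) ((i : ℕ) + 1) ∧
           x 1 ∈ Set.Ioc ((j : ℕ) : ℝ) ((j : ℕ) + 1) then a i j else 0) :
    (∀ p : ℝ, 1 ≤ p → MemLp I (ENNReal.ofReal p)) ∧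
    ∀ (i : Fin N) (j : Fin M) (x : EuclideanSpace ℝ (Fin 2)),
      x 0 ∈ Set.Ioo ((i : ℕ) : ℝ) ((i : ℕ) + 1) →
      x 1 ∈ Set.Ioo ((j : ℕ) : ℝ) ((j : ℕ) + 1) →
      I x = a i j ∧
      Tendsto (fun w : ℝ => SK 2 χ I w x) atTop (nhds (I x)) :=
  stmt17_general χ hχ2 hχ3 hχ0 N M a I hI
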